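/- Let h : I → ℝ satisfy h' = φ'·M on I, and let J ⊆ I be a nonempty open subinterval on which A(x) ≠ 0 for all x ∈ J and B² − 4AC ≥ 0 on J. Then the identity (h − F₁)'·A·(F₂ − F₁)·q·φ²·φ'·M = F₁·( (F₁ − φM)·(A²·(F₁ − φM) + E₁·M) + C·φ²·(q·M'/M)' ) holds everywhere on J. -/

import Mathlib

/-!
`F₁` is a root of `A t² - B t + C`; write `D = B² - 4AC`, so that `A (F₂ - F₁) = √D = B - 2AF₁`.
Where `D > 0`, `F₁` is differentiable and differentiating the root relation gives
`F₁' √D = A'F₁² - B'F₁ + C'`. Where `D` vanishes, `F₁` may fail to be differentiable, but then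
`F₂ = F₁`, and since `D ≥ 0` has a minimum there, `D' = 0`, which forces `A'F₁² - B'F₁ + C' = 0`.
Either way the left side of the identity is `(φ'M (B - 2AF₁) - (A'F₁² - B'F₁ + C')) qφ²φ'M`,
and writing `A, B, C, E₁` and their derivatives through the jets of `q, φ, M` turns it into a
polynomial identity modulo the root relation.
-/

open Real Set MeasureTheory

/-- `A = (qφ')'φ − qφ'²` from Definition 1. -/
noncomputable def Afun (q φ : ℝ → ℝ) : ℝ → ℝ :=
  fun x => deriv (fun y => q y * deriv φ y) x * φ x - q x * (deriv φ x) ^ 2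

/-- `B₀ = (qφ')'φ²` from Definition 1. -/
noncomputable def B0fun (q φ : ℝ → ℝ) : ℝ → ℝ :=
  fun x => deriv (fun y => q y * deriv φ y) x * (φ x) ^ 2

/-- `B = (qφ'M)'φ²` from Definition 1. -/
noncomputable def Bfun (q φ M : ℝ → ℝ) : ℝ → ℝ :=
  fun x => deriv (fun y => q y * deriv φ y * M y) x * (φ x) ^ 2

/-- `C = qφ²φ'²M²` from Definition 1. -/
noncomputable def Cfun (q φ M : ℝ → ℝ) : ℝ → ℝ :=
  fun x => q x * (φ x) ^ 2 * (deriv φ x) ^ 2 * (M x) ^ 2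

/-- `E₂ = A q φ φ'² − B₀' q φ φ' + (qφ')' φ q (φ²φ')'` from Definition 1. -/
noncomputable def E2fun (q φ : ℝ → ℝ) : ℝ → ℝ :=
  fun x => Afun q φ x * q x * φ x * (deriv φ x) ^ 2
    - deriv (B0fun q φ) x * q x * φ x * deriv φ x
    + deriv (fun y => q y * deriv φ y) x * φ x * q x *
        deriv (fun y => (φ y) ^ 2 * deriv φ y) x

/-- `E₁ = A²φ + E₂` from Definition 1. -/
noncomputable def E1fun (q φ : ℝ → ℝ) : ℝ → ℝ :=
  fun x => (Afun q φ x) ^ 2 * φ x + E2fun q φ x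

/-- `F₁ = (B − √(B²−4AC))/(2A)` from Definition 1. -/
noncomputable def F1fun (q φ M : ℝ → ℝ) : ℝ → ℝ :=
  fun x => (Bfun q φ M x -
    Real.sqrt ((Bfun q φ M x) ^ 2 - 4 * Afun q φ x * Cfun q φ M x)) / (2 * Afun q φ x)

/-- `F₂ = (B + √(B²−4AC))/(2A)` from Definition 1. -/
noncomputable def F2fun (q φ M : ℝ → ℝ) : ℝ → ℝ :=
  fun x => (Bfun q φ M x +
    Real.sqrt ((Bfun q φ M x) ^ 2 - 4 * Afun q φ x * Cfun q φ M x)) / (2 * Afun q φ x)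

open Filter Topology

/-- The roots of `a t² - b t + c` (note the sign of `b`): pointwise, `F1fun` and `F2fun` are
`lowerRoot` and `upperRoot` of `(Afun, Bfun, Cfun)`. -/
noncomputable def lowerRoot (a b c : ℝ) : ℝ := (b - √(discrim a b c)) / (2 * a)

noncomputable def upperRoot (a b c : ℝ) : ℝ := (b + √(discrim a b c)) / (2 * a)

section QuadraticRoot

variable {a b c : ℝ}

theorem two_mul_mul_lowerRoot (ha : a ≠ 0) : 2 * a * lowerRoot a b c = b - √(discrim a b c) := by
  unfold lowerRoot
  field_simp

theorem mul_upperRoot_sub_lowerRoot (ha : a ≠ 0) :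
    a * (upperRoot a b c - lowerRoot a b c) = √(discrim a b c) := by
  unfold upperRoot lowerRoot
  field_simp
  ring

theorem lowerRoot_isRoot (ha : a ≠ 0) (hd : 0 ≤ discrim a b c) :
    a * lowerRoot a b c ^ 2 - b * lowerRoot a b c + c = 0 := by
  have h4a : 4 * a ≠ 0 := mul_ne_zero four_ne_zero ha
  apply mul_left_cancel₀ h4a
  linear_combination (2 * a * lowerRoot a b c - b - √(discrim a b c))
    * two_mul_mul_lowerRoot (b := b) (c := c) ha + Real.sq_sqrt hd
    + discrim.eq_1 a b c

end QuadraticRoot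

section QuadraticRootDeriv

variable {a b c h : ℝ → ℝ} {a' b' c' h' x : ℝ}

theorem hasDerivAt_discrim (ha : HasDerivAt a a' x) (hb : HasDerivAt b b' x)
    (hc : HasDerivAt c c' x) :
    HasDerivAt (fun y => discrim (a y) (b y) (c y))
      (2 * b x * b' - 4 * (a' * c x + a x * c')) x :=
  ((hb.fun_pow 2).fun_sub ((ha.const_mul 4).fun_mul hc)).congr_deriv (by ring)

theorem deriv_coeffs_eval_lowerRoot_eq_zero (ha : HasDerivAt a a' x) (hb : HasDerivAt b b' x)
    (hc : HasDerivAt c c' x) (ha0 : a x ≠ 0)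
    (hmin : IsLocalMin (fun y => discrim (a y) (b y) (c y)) x)
    (hz : discrim (a x) (b x) (c x) = 0) :
    a' * lowerRoot (a x) (b x) (c x) ^ 2 - b' * lowerRoot (a x) (b x) (c x) + c' = 0 := by
  have hD' := hmin.hasDerivAt_eq_zero (hasDerivAt_discrim ha hb hc)
  have hr := two_mul_mul_lowerRoot (b := b x) (c := c x) ha0
  rw [hz, Real.sqrt_zero, sub_zero] at hr
  apply mul_left_cancel₀ (pow_ne_zero 2 (mul_ne_zero two_ne_zero ha0))
  linear_combination (a' * (2 * a x * lowerRoot (a x) (b x) (c x) + b x)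
    - 2 * a x * b') * hr + a' * hz - a x * hD' - a' * discrim.eq_1 (a x) (b x) (c x)

theorem hasDerivAt_lowerRoot (ha : HasDerivAt a a' x) (hb : HasDerivAt b b' x)
    (hc : HasDerivAt c c' x) (ha0 : a x ≠ 0) (hpos : 0 < discrim (a x) (b x) (c x)) :
    HasDerivAt (fun y => lowerRoot (a y) (b y) (c y))
      ((a' * lowerRoot (a x) (b x) (c x) ^ 2 - b' * lowerRoot (a x) (b x) (c x) + c')
        / √(discrim (a x) (b x) (c x))) x := by
  set r := fun y => lowerRoot (a y) (b y) (c y)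
  have hD := hasDerivAt_discrim ha hb hc
  have hr : HasDerivAt r (deriv r x) x :=
    ((hb.differentiableAt.fun_sub (hD.differentiableAt.sqrt hpos.ne')).fun_div
      (ha.differentiableAt.const_mul 2) (mul_ne_zero two_ne_zero ha0)).hasDerivAt
  have hroot : (fun y => a y * r y ^ 2 - b y * r y + c y) =ᶠ[𝓝 x] fun _ => 0 := by
    filter_upwards [ha.continuousAt.eventually_ne ha0,
      hD.continuousAt.eventually (lt_mem_nhds hpos)] with y hay hDy
    exact lowerRoot_isRoot hay hDy.le
  have hzero := (((ha.fun_mul (hr.fun_pow 2)).fun_sub (hb.fun_mul hr)).fun_add hc).unique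
    ((hasDerivAt_const x (0 : ℝ)).congr_of_eventuallyEq hroot)
  have hs := two_mul_mul_lowerRoot (b := b x) (c := c x) ha0
  convert hr using 1
  rw [div_eq_iff (Real.sqrt_pos.2 hpos).ne']
  linear_combination hzero - deriv r x * hs

theorem deriv_sub_lowerRoot_mul_sub (hh : HasDerivAt h h' x) (ha : HasDerivAt a a' x)
    (hb : HasDerivAt b b' x) (hc : HasDerivAt c c' x) (ha0 : a x ≠ 0)
    (hD : ∀ᶠ y in 𝓝 x, 0 ≤ discrim (a y) (b y) (c y)) :
    deriv (fun y => h y - lowerRoot (a y) (b y) (c y)) x * a x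
        * (upperRoot (a x) (b x) (c x) - lowerRoot (a x) (b x) (c x))
      = h' * (b x - 2 * a x * lowerRoot (a x) (b x) (c x))
        - (a' * lowerRoot (a x) (b x) (c x) ^ 2 - b' * lowerRoot (a x) (b x) (c x) + c') := by
  rw [mul_assoc, mul_upperRoot_sub_lowerRoot ha0, two_mul_mul_lowerRoot ha0, sub_sub_cancel]
  rcases hD.self_of_nhds.eq_or_lt with hz | hpos
  · have hmin : IsLocalMin (fun y => discrim (a y) (b y) (c y)) x :=
      hD.mono fun y hy => hz.symm.trans_le hy
    rw [← hz, Real.sqrt_zero, mul_zero, mul_zero,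
      deriv_coeffs_eval_lowerRoot_eq_zero ha hb hc ha0 hmin hz.symm, sub_zero]
  · rw [(hh.fun_sub (hasDerivAt_lowerRoot ha hb hc ha0 hpos)).deriv, sub_mul,
      div_mul_cancel₀ _ (Real.sqrt_pos.2 hpos).ne']

end QuadraticRootDeriv

/-- The identity at one point: `q0, q1` stand for `q, q'`, `f0, f1, f2` for `φ, φ', φ''`,
`m0, m1, m2` for `M, M', M''`, `w1, w2` for `(qφ')', (qφ')''`, `g` for `(qM'/M)'`, and
`a1, b1, c1` for `A', B', C'`. -/
theorem identity_of_jets {q0 q1 f0 f1 f2 m0 m1 m2 w1 w2 r g a a1 b b1 c c1 e1 : ℝ}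
    (hw1 : w1 = q1 * f1 + q0 * f2)
    (ha : a = w1 * f0 - q0 * f1 ^ 2) (ha1 : a1 = w2 * f0 - q0 * f1 * f2)
    (hb : b = (w1 * m0 + q0 * f1 * m1) * f0 ^ 2)
    (hb1 : b1 = (w2 * m0 + 2 * w1 * m1 + q0 * f1 * m2) * f0 ^ 2
      + 2 * (w1 * m0 + q0 * f1 * m1) * f0 * f1)
    (hc : c = q0 * f0 ^ 2 * f1 ^ 2 * m0 ^ 2)
    (hc1 : c1 = q1 * f0 ^ 2 * f1 ^ 2 * m0 ^ 2 + 2 * q0 * f0 * f1 ^ 3 * m0 ^ 2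
      + 2 * q0 * f0 ^ 2 * f1 * f2 * m0 ^ 2 + 2 * q0 * f0 ^ 2 * f1 ^ 2 * m0 * m1)
    (he1 : e1 = a ^ 2 * f0 + (a * q0 * f0 * f1 ^ 2
      - (w2 * f0 ^ 2 + 2 * w1 * f0 * f1) * q0 * f0 * f1
      + w1 * f0 * q0 * (2 * f0 * f1 ^ 2 + f0 ^ 2 * f2)))
    (ha0 : a ≠ 0) (hm0 : m0 ≠ 0) (hr : a * r ^ 2 - b * r + c = 0)
    (hg : g * m0 ^ 2 = (q1 * m1 + q0 * m2) * m0 - q0 * m1 ^ 2) :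
    (f1 * m0 * (b - 2 * a * r) - (a1 * r ^ 2 - b1 * r + c1)) * (q0 * f0 ^ 2 * f1 * m0)
      = r * ((r - f0 * m0) * (a ^ 2 * (r - f0 * m0) + e1 * m0) + c * f0 ^ 2 * g) := by
  have key : a * m0 ^ 2 * ((f1 * m0 * (b - 2 * a * r) - (a1 * r ^ 2 - b1 * r + c1))
      * (q0 * f0 ^ 2 * f1 * m0)
      - r * ((r - f0 * m0) * (a ^ 2 * (r - f0 * m0) + e1 * m0) + c * f0 ^ 2 * g))
      = ((2 * a ^ 2 * f0 - e1) * m0 - a ^ 2 * r - a1 * (q0 * f0 ^ 2 * f1 * m0) - a * b)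
          * m0 ^ 2 * (a * r ^ 2 - b * r + c)
        - a * r * c * f0 ^ 2 * (g * m0 ^ 2 - ((q1 * m1 + q0 * m2) * m0 - q0 * m1 ^ 2)) := by
    subst ha ha1 hb hb1 hc hc1 he1 hw1
    ring
  rw [hr, hg, sub_self, mul_zero, mul_zero, sub_zero, mul_eq_zero, sub_eq_zero] at key
  exact key.resolve_left (mul_ne_zero ha0 (pow_ne_zero 2 hm0))

theorem hasDerivAt_deriv_mul {f g : ℝ → ℝ} {x : ℝ} (hf : ∀ᶠ y in 𝓝 x, DifferentiableAt ℝ f y)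
    (hg : ∀ᶠ y in 𝓝 x, DifferentiableAt ℝ g y) (hf' : DifferentiableAt ℝ (deriv f) x)
    (hg' : DifferentiableAt ℝ (deriv g) x) :
    HasDerivAt (deriv fun y => f y * g y)
      (deriv (deriv f) x * g x + 2 * deriv f x * deriv g x + f x * deriv (deriv g) x) x := by
  have hfg : deriv (fun y => f y * g y) =ᶠ[𝓝 x] fun y => deriv f y * g y + f y * deriv g y := by
    filter_upwards [hf, hg] with y hfy hgy using deriv_mul hfy hgy
  refine (((hf'.hasDerivAt.fun_mul hg.self_of_nhds.hasDerivAt).fun_add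
    (hf.self_of_nhds.hasDerivAt.fun_mul hg'.hasDerivAt)).congr_deriv ?_).congr_of_eventuallyEq hfg
  ring

section Coefficients

variable {U : Set ℝ} {q φ M : ℝ → ℝ} {x : ℝ}

theorem differentiableAt_deriv_mul_deriv (hU : U ∈ 𝓝 x)
    (hq : ∀ y ∈ U, DifferentiableAt ℝ q y) (hq' : ∀ y ∈ U, DifferentiableAt ℝ (deriv q) y)
    (hφ' : ∀ y ∈ U, DifferentiableAt ℝ (deriv φ) y)
    (hφ'' : ∀ y ∈ U, DifferentiableAt ℝ (deriv (deriv φ)) y) :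
    DifferentiableAt ℝ (deriv fun y => q y * deriv φ y) x :=
  (hasDerivAt_deriv_mul (eventually_of_mem hU hq) (eventually_of_mem hU hφ')
    (hq' x (mem_of_mem_nhds hU)) (hφ'' x (mem_of_mem_nhds hU))).differentiableAt

theorem hasDerivAt_Afun (hq : DifferentiableAt ℝ q x) (hφ : DifferentiableAt ℝ φ x)
    (hφ' : DifferentiableAt ℝ (deriv φ) x)
    (hW' : DifferentiableAt ℝ (deriv fun y => q y * deriv φ y) x) :
    HasDerivAt (Afun q φ) (deriv (deriv fun y => q y * deriv φ y) x * φ x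
      - q x * deriv φ x * deriv (deriv φ) x) x := by
  have hW := (hq.hasDerivAt.fun_mul hφ'.hasDerivAt).deriv
  refine ((hW'.hasDerivAt.fun_mul hφ.hasDerivAt).fun_sub
    (hq.hasDerivAt.fun_mul (hφ'.hasDerivAt.fun_pow 2))).congr_deriv ?_
  rw [hW]
  ring

theorem Bfun_eq (hq : DifferentiableAt ℝ q x) (hφ' : DifferentiableAt ℝ (deriv φ) x)
    (hM : DifferentiableAt ℝ M x) :
    Bfun q φ M x = (deriv (fun y => q y * deriv φ y) x * M x
      + q x * deriv φ x * deriv M x) * φ x ^ 2 := by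
  rw [Bfun, ((hq.fun_mul hφ').hasDerivAt.fun_mul hM.hasDerivAt).deriv]

theorem hasDerivAt_Bfun (hU : U ∈ 𝓝 x)
    (hq : ∀ y ∈ U, DifferentiableAt ℝ q y) (hφ : DifferentiableAt ℝ φ x)
    (hφ' : ∀ y ∈ U, DifferentiableAt ℝ (deriv φ) y)
    (hW' : DifferentiableAt ℝ (deriv fun y => q y * deriv φ y) x)
    (hM : ∀ y ∈ U, DifferentiableAt ℝ M y) (hM' : DifferentiableAt ℝ (deriv M) x) :
    HasDerivAt (Bfun q φ M)
      ((deriv (deriv fun y => q y * deriv φ y) x * M x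
          + 2 * deriv (fun y => q y * deriv φ y) x * deriv M x
          + q x * deriv φ x * deriv (deriv M) x) * φ x ^ 2
        + 2 * (deriv (fun y => q y * deriv φ y) x * M x + q x * deriv φ x * deriv M x)
          * φ x * deriv φ x) x := by
  have hx := mem_of_mem_nhds hU
  have hWM := hasDerivAt_deriv_mul (f := fun y => q y * deriv φ y) (g := M)
    (eventually_of_mem hU fun y hy => (hq y hy).fun_mul (hφ' y hy)) (eventually_of_mem hU hM)
    hW' hM'
  refine (hWM.fun_mul (hφ.hasDerivAt.fun_pow 2)).congr_deriv ?_
  rw [((hq x hx).fun_mul (hφ' x hx)).hasDerivAt.fun_mul (hM x hx).hasDerivAt |>.deriv]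
  ring

theorem hasDerivAt_Cfun (hq : DifferentiableAt ℝ q x) (hφ : DifferentiableAt ℝ φ x)
    (hφ' : DifferentiableAt ℝ (deriv φ) x) (hM : DifferentiableAt ℝ M x) :
    HasDerivAt (Cfun q φ M)
      (deriv q x * φ x ^ 2 * deriv φ x ^ 2 * M x ^ 2 + 2 * q x * φ x * deriv φ x ^ 3 * M x ^ 2
        + 2 * q x * φ x ^ 2 * deriv φ x * deriv (deriv φ) x * M x ^ 2
        + 2 * q x * φ x ^ 2 * deriv φ x ^ 2 * M x * deriv M x) x :=
  (((hq.hasDerivAt.fun_mul (hφ.hasDerivAt.fun_pow 2)).fun_mul (hφ'.hasDerivAt.fun_pow 2)).fun_mul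
    (hM.hasDerivAt.fun_pow 2)).congr_deriv (by ring)

theorem E1fun_eq (hφ : DifferentiableAt ℝ φ x) (hφ' : DifferentiableAt ℝ (deriv φ) x)
    (hW' : DifferentiableAt ℝ (deriv fun y => q y * deriv φ y) x) :
    E1fun q φ x = Afun q φ x ^ 2 * φ x + (Afun q φ x * q x * φ x * deriv φ x ^ 2
      - (deriv (deriv fun y => q y * deriv φ y) x * φ x ^ 2
        + 2 * deriv (fun y => q y * deriv φ y) x * φ x * deriv φ x) * q x * φ x * deriv φ x
      + deriv (fun y => q y * deriv φ y) x * φ x * q x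
        * (2 * φ x * deriv φ x ^ 2 + φ x ^ 2 * deriv (deriv φ) x)) := by
  have hB0 : HasDerivAt (B0fun q φ) (deriv (deriv fun y => q y * deriv φ y) x * φ x ^ 2
      + 2 * deriv (fun y => q y * deriv φ y) x * φ x * deriv φ x) x :=
    (hW'.hasDerivAt.fun_mul (hφ.hasDerivAt.fun_pow 2)).congr_deriv (by ring)
  have hφ2φ' : HasDerivAt (fun y => φ y ^ 2 * deriv φ y)
      (2 * φ x * deriv φ x ^ 2 + φ x ^ 2 * deriv (deriv φ) x) x :=
    ((hφ.hasDerivAt.fun_pow 2).fun_mul hφ'.hasDerivAt).congr_deriv (by ring)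
  rw [E1fun, E2fun, hB0.deriv, hφ2φ'.deriv]

theorem deriv_mul_deriv_div_mul_sq (hq : DifferentiableAt ℝ q x) (hM : DifferentiableAt ℝ M x)
    (hM' : DifferentiableAt ℝ (deriv M) x) (hM0 : M x ≠ 0) :
    deriv (fun y => q y * deriv M y / M y) x * M x ^ 2
      = (deriv q x * deriv M x + q x * deriv (deriv M) x) * M x - q x * deriv M x ^ 2 := by
  rw [((hq.hasDerivAt.fun_mul hM'.hasDerivAt).fun_div hM.hasDerivAt hM0).deriv]
  field_simp

end Coefficients

theorem F1fun_identity_at {U : Set ℝ} {q φ M h : ℝ → ℝ} {x : ℝ} (hU : U ∈ 𝓝 x)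
    (hq : ∀ y ∈ U, DifferentiableAt ℝ q y) (hq' : ∀ y ∈ U, DifferentiableAt ℝ (deriv q) y)
    (hφ : ∀ y ∈ U, DifferentiableAt ℝ φ y) (hφ' : ∀ y ∈ U, DifferentiableAt ℝ (deriv φ) y)
    (hφ'' : ∀ y ∈ U, DifferentiableAt ℝ (deriv (deriv φ)) y)
    (hM : ∀ y ∈ U, DifferentiableAt ℝ M y) (hM' : ∀ y ∈ U, DifferentiableAt ℝ (deriv M) y)
    (hh : HasDerivAt h (deriv φ x * M x) x) (hA0 : Afun q φ x ≠ 0) (hM0 : M x ≠ 0)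
    (hD : ∀ᶠ y in 𝓝 x, 0 ≤ (Bfun q φ M y) ^ 2 - 4 * Afun q φ y * Cfun q φ M y) :
    deriv (fun y => h y - F1fun q φ M y) x * Afun q φ x *
        (F2fun q φ M x - F1fun q φ M x) * q x * (φ x) ^ 2 * deriv φ x * M x =
      F1fun q φ M x *
        ((F1fun q φ M x - φ x * M x) *
            ((Afun q φ x) ^ 2 * (F1fun q φ M x - φ x * M x) + E1fun q φ x * M x)
          + Cfun q φ M x * (φ x) ^ 2 * deriv (fun y => q y * deriv M y / M y) x) := by
  have hx := mem_of_mem_nhds hU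
  have hW' := differentiableAt_deriv_mul_deriv hU hq hq' hφ' hφ''
  have hA := hasDerivAt_Afun (hq x hx) (hφ x hx) (hφ' x hx) hW'
  have hB := hasDerivAt_Bfun hU hq (hφ x hx) hφ' hW' hM (hM' x hx)
  have hC := hasDerivAt_Cfun (hq x hx) (hφ x hx) (hφ' x hx) (hM x hx)
  calc _ = deriv (fun y => h y - F1fun q φ M y) x * Afun q φ x
        * (F2fun q φ M x - F1fun q φ M x) * (q x * φ x ^ 2 * deriv φ x * M x) := by ring
    _ = _ := congrArg (· * (q x * φ x ^ 2 * deriv φ x * M x))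
        (deriv_sub_lowerRoot_mul_sub hh hA hB hC hA0 hD)
    _ = _ := identity_of_jets ((hq x hx).hasDerivAt.fun_mul (hφ' x hx).hasDerivAt).deriv rfl rfl
        (Bfun_eq (hq x hx) (hφ' x hx) (hM x hx)) rfl rfl rfl (E1fun_eq (hφ x hx) (hφ' x hx) hW')
        hA0 hM0 (lowerRoot_isRoot hA0 hD.self_of_nhds)
        (deriv_mul_deriv_div_mul_sq (hq x hx) (hM x hx) (hM' x hx) hM0)

theorem stmt4_general (I : Set ℝ) (hI : IsOpen I)
    (q φ : ℝ → ℝ)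
    (hq1 : ∀ x ∈ I, DifferentiableAt ℝ q x)
    (hq2 : ∀ x ∈ I, DifferentiableAt ℝ (deriv q) x)
    (hφ1 : ∀ x ∈ I, DifferentiableAt ℝ φ x)
    (hφ2 : ∀ x ∈ I, DifferentiableAt ℝ (deriv φ) x)
    (hφ3 : ∀ x ∈ I, DifferentiableAt ℝ (deriv (deriv φ)) x)
    (M : ℝ → ℝ)
    (hMpos : ∀ x ∈ I, 0 < M x)
    (hM1 : ∀ x ∈ I, DifferentiableAt ℝ M x)
    (hM2 : ∀ x ∈ I, DifferentiableAt ℝ (deriv M) x)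
    (h : ℝ → ℝ) (hh : ∀ x ∈ I, HasDerivAt h (deriv φ x * M x) x)
    (J : Set ℝ) (hJ : IsOpen J)
    (hJI : J ⊆ I)
    (hA : ∀ x ∈ J, Afun q φ x ≠ 0)
    (hdisc : ∀ x ∈ J, 0 ≤ (Bfun q φ M x) ^ 2 - 4 * Afun q φ x * Cfun q φ M x) :
    ∀ x ∈ J,
      deriv (fun y => h y - F1fun q φ M y) x * Afun q φ x *
          (F2fun q φ M x - F1fun q φ M x) * q x * (φ x) ^ 2 * deriv φ x * M x =
        F1fun q φ M x *
          ((F1fun q φ M x - φ x * M x) *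
              ((Afun q φ x) ^ 2 * (F1fun q φ M x - φ x * M x) + E1fun q φ x * M x)
            + Cfun q φ M x * (φ x) ^ 2 * deriv (fun y => q y * deriv M y / M y) x) := by
  intro x hx
  have hxI := hJI hx
  exact F1fun_identity_at (hI.mem_nhds hxI) hq1 hq2 hφ1 hφ2 hφ3 hM1 hM2 (hh x hxI) (hA x hx)
    (hMpos x hxI).ne' (eventually_of_mem (hJ.mem_nhds hx) hdisc)

/-- Lemma 5, identity (6): on a subinterval `J` where `A ≠ 0` and `B² − 4AC ≥ 0`,
`(h−F₁)'·A·(F₂−F₁)·q·φ²·φ'·M = F₁·((F₁−φM)·(A²·(F₁−φM)+E₁·M)+C·φ²·(q·M'/M)')`. -/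
theorem stmt4 (I : Set ℝ) (hI : IsOpen I) (hne : I.Nonempty) (hconn : I.OrdConnected)
    (q φ : ℝ → ℝ)
    (hqpos : ∀ x ∈ I, 0 < q x)
    (hq1 : ∀ x ∈ I, DifferentiableAt ℝ q x)
    (hq2 : ∀ x ∈ I, DifferentiableAt ℝ (deriv q) x)
    (hφ1 : ∀ x ∈ I, DifferentiableAt ℝ φ x)
    (hφ2 : ∀ x ∈ I, DifferentiableAt ℝ (deriv φ) x)
    (hφ3 : ∀ x ∈ I, DifferentiableAt ℝ (deriv (deriv φ)) x)
    (M : ℝ → ℝ)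
    (hMpos : ∀ x ∈ I, 0 < M x)
    (hM1 : ∀ x ∈ I, DifferentiableAt ℝ M x)
    (hM2 : ∀ x ∈ I, DifferentiableAt ℝ (deriv M) x)
    (h : ℝ → ℝ) (hh : ∀ x ∈ I, HasDerivAt h (deriv φ x * M x) x)
    (J : Set ℝ) (hJ : IsOpen J) (hJne : J.Nonempty) (hJconn : J.OrdConnected)
    (hJI : J ⊆ I)
    (hA : ∀ x ∈ J, Afun q φ x ≠ 0)
    (hdisc : ∀ x ∈ J, 0 ≤ (Bfun q φ M x) ^ 2 - 4 * Afun q φ x * Cfun q φ M x) :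
    ∀ x ∈ J,
      deriv (fun y => h y - F1fun q φ M y) x * Afun q φ x *
          (F2fun q φ M x - F1fun q φ M x) * q x * (φ x) ^ 2 * deriv φ x * M x =
        F1fun q φ M x *
          ((F1fun q φ M x - φ x * M x) *
              ((Afun q φ x) ^ 2 * (F1fun q φ M x - φ x * M x) + E1fun q φ x * M x)
            + Cfun q φ M x * (φ x) ^ 2 * deriv (fun y => q y * deriv M y / M y) x) :=
  stmt4_general I hI q φ hq1 hq2 hφ1 hφ2 hφ3 M hMpos hM1 hM2 h hh J hJ hJI hA hdisc
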